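/- In an SP-structure satisfying Symmetry, Non-negativity, Boundedness, O-Projection, and Factorization, for ortho-sets A and B the following are equivalent: (1) Ā ⊆ B̄; (2) A ⊆ B̄; (3) p(x,A) ≤ p(x,B) for every state x. -/

import Mathlib

/-! If every element of `A` lies in `B̄`, then for any state `x` with `p(x,B) < 1`, O-Projection
gives a `y` orthogonal to `B` completing `x`. Boundedness on `B ∪ {y}` forces `p(a,y) = 0` for
`a ∈ A ⊆ B̄`, so `A ∪ {y}` is an ortho-set and Boundedness on it gives
`p(x,A) ≤ 1 - p(x,y) = p(x,B)`. The remaining implications are immediate, since `A ⊆ Ā`. -/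

variable {Ω : Type*}

def IsOrtho (p : Ω → Ω → ℝ) (A : Set Ω) : Prop :=
  ∀ x ∈ A, ∀ y ∈ A, x ≠ y → p x y = 0

noncomputable def pSet (p : Ω → Ω → ℝ) (x : Ω) (A : Set Ω) : ℝ :=
  ∑' a : A, p x a

def Symm (p : Ω → Ω → ℝ) : Prop := ∀ x y, p x y = p y x

def Nonneg (p : Ω → Ω → ℝ) : Prop := ∀ x y, 0 ≤ p x y

def Bounded (p : Ω → Ω → ℝ) : Prop :=
  ∀ (x : Ω) (A : Set Ω), IsOrtho p A →
    Summable (fun a : A => p x a) ∧ pSet p x A ≤ 1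

def OProj (p : Ω → Ω → ℝ) : Prop :=
  ∀ (x : Ω) (A : Set Ω), IsOrtho p A → pSet p x A < 1 →
    ∃ y, pSet p y A = 0 ∧ pSet p x A + p x y = 1

def Factor (p : Ω → Ω → ℝ) : Prop :=
  ∀ (x y z : Ω) (A : Set Ω), IsOrtho p A → pSet p y A = 1 → pSet p z A = 1 →
    p x y = pSet p x A → p x z = p x y * p y z

def Subgen (p : Ω → Ω → ℝ) (A : Set Ω) : Set Ω := {x | pSet p x A = 1}

def IsSubspace (p : Ω → Ω → ℝ) (X : Set Ω) : Prop :=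
  ∃ A, IsOrtho p A ∧ X = Subgen p A

def Standard (p : Ω → Ω → ℝ) : Prop := ∀ x y, p x y = 1 → x = y

variable {p : Ω → Ω → ℝ}

lemma pSet_singleton (x y : Ω) : pSet p x {y} = p x y :=
  tsum_singleton y (p x)

lemma isOrtho_singleton (y : Ω) : IsOrtho p {y} := by
  rintro a rfl b rfl hab
  exact absurd rfl hab

lemma pSet_insert (x : Ω) {S : Set Ω} {y : Ω} (hy : y ∉ S)
    (hS : Summable (fun a : S => p x a)) :
    pSet p x (insert y S) = p x y + pSet p x S := by
  rw [pSet, Set.insert_eq, Summable.tsum_union_disjoint (Set.disjoint_singleton_left.mpr hy)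
    ((Set.finite_singleton y).summable _) hS, tsum_singleton y (p x), pSet]

lemma apply_self_eq_one (hsymm : Symm p) (hbdd : Bounded p) (hproj : OProj p) (w : Ω) :
    p w w = 1 := by
  rcases (hbdd w {w} (isOrtho_singleton w)).2.lt_or_eq with hlt | heq
  · obtain ⟨y, hy, hsum⟩ := hproj w {w} (isOrtho_singleton w) hlt
    rw [pSet_singleton] at hy hsum
    rwa [hsymm w y, hy, add_zero] at hsum
  · rwa [pSet_singleton] at heq

lemma notMem_of_forall_apply_eq_zero {y : Ω} (hyy : p y y = 1) {S : Set Ω}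
    (hy : ∀ a ∈ S, p y a = 0) : y ∉ S :=
  fun hyS => one_ne_zero (hyy ▸ hy y hyS)

lemma IsOrtho.insert (hsymm : Symm p) {S : Set Ω} (hS : IsOrtho p S) {y : Ω}
    (hy : ∀ a ∈ S, p y a = 0) : IsOrtho p (insert y S) := by
  rintro a (rfl | ha) b (rfl | hb) hab
  · exact absurd rfl hab
  · exact hy b hb
  · rw [hsymm]; exact hy a ha
  · exact hS a ha b hb hab

lemma subset_subgen (hsymm : Symm p) (hnonneg : Nonneg p) (hbdd : Bounded p) (hproj : OProj p)
    {A : Set Ω} (hA : IsOrtho p A) : A ⊆ Subgen p A := fun a ha =>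
  le_antisymm (hbdd a A hA).2 <|
    calc (1 : ℝ) = p a a := (apply_self_eq_one hsymm hbdd hproj a).symm
      _ ≤ pSet p a A := (hbdd a A hA).1.le_tsum ⟨a, ha⟩ fun b _ => hnonneg a b

lemma apply_eq_zero_of_pSet_eq_zero (hnonneg : Nonneg p) (hbdd : Bounded p) {A : Set Ω}
    (hA : IsOrtho p A) {y : Ω} (hy : pSet p y A = 0) {a : Ω} (ha : a ∈ A) : p y a = 0 :=
  le_antisymm (hy ▸ (hbdd y A hA).1.le_tsum ⟨a, ha⟩ fun b _ => hnonneg y b) (hnonneg y a)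

lemma apply_eq_zero_of_mem_subgen (hsymm : Symm p) (hnonneg : Nonneg p) (hbdd : Bounded p)
    {B : Set Ω} (hB : IsOrtho p B) {y : Ω} (hyB : ∀ b ∈ B, p y b = 0) (hyy : p y y = 1)
    {a : Ω} (ha : a ∈ Subgen p B) : p a y = 0 := by
  have hle := (hbdd a _ (hB.insert hsymm hyB)).2
  rw [pSet_insert a (notMem_of_forall_apply_eq_zero hyy hyB) (hbdd a B hB).1,
    show pSet p a B = 1 from ha] at hle
  exact le_antisymm (by linarith) (hnonneg a y)

lemma pSet_le_of_subset_subgen (hsymm : Symm p) (hnonneg : Nonneg p) (hbdd : Bounded p)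
    (hproj : OProj p) {A B : Set Ω} (hA : IsOrtho p A) (hB : IsOrtho p B)
    (hAB : A ⊆ Subgen p B) (x : Ω) : pSet p x A ≤ pSet p x B := by
  rcases (hbdd x B hB).2.lt_or_eq with hlt | heq
  · obtain ⟨y, hy, hsum⟩ := hproj x B hB hlt
    have hyy := apply_self_eq_one hsymm hbdd hproj y
    have hyB : ∀ b ∈ B, p y b = 0 := fun b hb =>
      apply_eq_zero_of_pSet_eq_zero hnonneg hbdd hB hy hb
    have hyA : ∀ a ∈ A, p y a = 0 := fun a ha => by
      rw [hsymm]; exact apply_eq_zero_of_mem_subgen hsymm hnonneg hbdd hB hyB hyy (hAB ha)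
    have hle := (hbdd x _ (hA.insert hsymm hyA)).2
    rw [pSet_insert x (notMem_of_forall_apply_eq_zero hyy hyA) (hbdd x A hA).1] at hle
    linarith
  · exact heq ▸ (hbdd x A hA).2

lemma subgen_subset_of_pSet_le (hbdd : Bounded p) {A B : Set Ω} (hB : IsOrtho p B)
    (h : ∀ x, pSet p x A ≤ pSet p x B) : Subgen p A ⊆ Subgen p B := fun x hx =>
  le_antisymm (hbdd x B hB).2 (hx ▸ h x)

theorem stmt14_general (p : Ω → Ω → ℝ) (h1 : Symm p) (h2 : Nonneg p) (h3 : Bounded p)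
    (h4 : OProj p) (A B : Set Ω)
    (hA : IsOrtho p A) (hB : IsOrtho p B) :
    (Subgen p A ⊆ Subgen p B ↔ A ⊆ Subgen p B) ∧
    (A ⊆ Subgen p B ↔ ∀ x : Ω, pSet p x A ≤ pSet p x B) := by
  have hAA := subset_subgen h1 h2 h3 h4 hA
  have h23 := pSet_le_of_subset_subgen h1 h2 h3 h4 hA hB
  have h31 := subgen_subset_of_pSet_le (A := A) h3 hB
  exact ⟨⟨hAA.trans, fun h => h31 (h23 h)⟩, ⟨h23, fun h => hAA.trans (h31 h)⟩⟩

theorem stmt14 (p : Ω → Ω → ℝ) (h1 : Symm p) (h2 : Nonneg p) (h3 : Bounded p)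
    (h4 : OProj p) (h5 : Factor p) (A B : Set Ω)
    (hA : IsOrtho p A) (hB : IsOrtho p B) :
    (Subgen p A ⊆ Subgen p B ↔ A ⊆ Subgen p B) ∧
    (A ⊆ Subgen p B ↔ ∀ x : Ω, pSet p x A ≤ pSet p x B) :=
  stmt14_general p h1 h2 h3 h4 A B hA hB
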